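/- Let K have characteristic 0, let r, s ∈ K* with r ≠ 1, s ≠ 1, such that rⁱsʲ = 1 implies i = j = 0, set α = r+s, β = −rs, and let n = 1 with parameter t. Then for any λ₁, λ₂, a ∈ K* and b ∈ K satisfying λ₁λ₂·φ(t) = φ(at+b), the assignment d ↦ λ₁d, u ↦ λ₂u, t ↦ at+b extends to a K-algebra automorphism of the down-up algebra A(α,β,φ). -/

import Mathlib

open MvPolynomial

namespace DownUp

inductive Gen | u | d

variable {K : Type} [Field K] {n : ℕ}

/-- Free algebra over the polynomial base ring on generators u, d. -/
abbrev F (K : Type) [Field K] (n : ℕ) := FreeAlgebra (MvPolynomial (Fin n) K) Gen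

noncomputable def uF : F K n := FreeAlgebra.ι _ Gen.u
noncomputable def dF : F K n := FreeAlgebra.ι _ Gen.d

/-- The defining relations of the down-up algebra over K[t₁,…,tₙ]. -/
inductive Rel (α β : K) (φ : MvPolynomial (Fin n) K) : F K n → F K n → Prop
  | ddu : Rel α β φ (dF * dF * uF)
      (α • (dF * uF * dF) + β • (uF * dF * dF) + algebraMap _ _ φ * dF)
  | duu : Rel α β φ (dF * uF * uF)
      (α • (uF * dF * uF) + β • (uF * uF * dF) + uF * algebraMap _ _ φ)

/-- The down-up algebra A(α,β,φ) over K[t₁,…,tₙ]. -/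
abbrev A (α β : K) (φ : MvPolynomial (Fin n) K) := RingQuot (Rel α β φ)

noncomputable def U (α β : K) (φ : MvPolynomial (Fin n) K) : A α β φ :=
  RingQuot.mkAlgHom K _ uF
noncomputable def D (α β : K) (φ : MvPolynomial (Fin n) K) : A α β φ :=
  RingQuot.mkAlgHom K _ dF

/-- Image of the base polynomial ring in A. -/
noncomputable def T (α β : K) (φ : MvPolynomial (Fin n) K) :
    MvPolynomial (Fin n) K →ₐ[K] A α β φ :=
  (RingQuot.mkAlgHom K (Rel α β φ)).comp (IsScalarTower.toAlgHom K (MvPolynomial (Fin n) K) (F K n))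

end DownUp

/-! The relations of `A α β φ` are homogeneous in `d` and in `u`, so rescaling `d` by `λ₁`,
`u` by `λ₂` and applying an automorphism `g` of the base ring respects them as soon as `g φ = λ₁ λ₂ φ`.
The same construction with `λ₁⁻¹`, `λ₂⁻¹`, `g⁻¹` gives the inverse, since an algebra map out of
`A α β φ` is determined by the images of `d`, `u` and the base ring. For `t ↦ a t + b` this is
the theorem. -/

theorem AlgEquiv.symm_apply_eq_units_inv_smul {R M : Type*} [CommSemiring R] [Semiring M]
    [Algebra R M] (g : M ≃ₐ[R] M) (c : Rˣ) {x : M} (h : g x = (c : R) • x) :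
    g.symm x = (↑c⁻¹ : R) • x := by
  rw [AlgEquiv.symm_apply_eq, map_smul, h, smul_smul, c.inv_mul, one_smul]

namespace MvPolynomial

variable {σ R : Type*} [CommRing R]

noncomputable def affineSubst (a : σ → Rˣ) (b : σ → R) : MvPolynomial σ R ≃ₐ[R] MvPolynomial σ R :=
  AlgEquiv.ofAlgHom (aeval fun i => C (a i : R) * X i + C (b i))
    (aeval fun i => C (↑(a i)⁻¹ : R) * (X i - C (b i)))
    (algHom_ext fun i => by
      simp only [AlgHom.comp_apply, aeval_X, map_mul, map_sub, aeval_C, algebraMap_eq,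
        AlgHom.coe_id, id_eq]
      rw [add_sub_cancel_right, ← mul_assoc, ← C_mul, Units.inv_mul, C_1, one_mul])
    (algHom_ext fun i => by
      simp only [AlgHom.comp_apply, aeval_X, map_add, map_mul, aeval_C, algebraMap_eq,
        AlgHom.coe_id, id_eq]
      rw [← mul_assoc, ← C_mul, Units.mul_inv, C_1, one_mul, sub_add_cancel])

theorem affineSubst_apply (a : σ → Rˣ) (b : σ → R) (p : MvPolynomial σ R) :
    affineSubst a b p = aeval (fun i => C (a i : R) * X i + C (b i)) p :=
  rfl

end MvPolynomial

namespace DownUp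

open MvPolynomial

variable {K : Type} [Field K] {n : ℕ} {α β : K} {φ : MvPolynomial (Fin n) K}

theorem T_mul_comm (p : MvPolynomial (Fin n) K) (x : A α β φ) :
    T α β φ p * x = x * T α β φ p := by
  obtain ⟨y, rfl⟩ := RingQuot.mkAlgHom_surjective K (Rel α β φ) x
  simp only [T, AlgHom.comp_apply, IsScalarTower.coe_toAlgHom', ← map_mul, Algebra.commutes]

theorem D_mul_D_mul_U :
    D α β φ * D α β φ * U α β φ =
      α • (D α β φ * U α β φ * D α β φ) + β • (U α β φ * D α β φ * D α β φ) +
        T α β φ φ * D α β φ := by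
  simpa only [map_mul, map_add, map_smul, U, D, T, AlgHom.comp_apply,
    IsScalarTower.coe_toAlgHom'] using RingQuot.mkAlgHom_rel K (Rel.ddu (α := α) (β := β) (φ := φ))

theorem D_mul_U_mul_U :
    D α β φ * U α β φ * U α β φ =
      α • (U α β φ * D α β φ * U α β φ) + β • (U α β φ * U α β φ * D α β φ) +
        U α β φ * T α β φ φ := by
  simpa only [map_mul, map_add, map_smul, U, D, T, AlgHom.comp_apply,
    IsScalarTower.coe_toAlgHom'] using RingQuot.mkAlgHom_rel K (Rel.duu (α := α) (β := β) (φ := φ))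

section Lift

variable {B : Type*} [Semiring B] [Algebra K B] (τ : MvPolynomial (Fin n) K →ₐ[K] B)
  (hτ : ∀ p x, τ p * x = x * τ p) (d u : B)

-- A central `τ` makes `B` an algebra over the base ring, so the free algebra maps to it.
noncomputable def liftFree : F K n →ₐ[K] B :=
  letI : Algebra (MvPolynomial (Fin n) K) B := RingHom.toAlgebra' τ.toRingHom hτ
  let f := FreeAlgebra.lift (MvPolynomial (Fin n) K) fun | Gen.u => u | Gen.d => d
  { f.toRingHom with
    commutes' := fun k => by
      change f (algebraMap K (F K n) k) = algebraMap K B k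
      rw [IsScalarTower.algebraMap_apply K (MvPolynomial (Fin n) K), f.commutes]
      exact τ.commutes k }

theorem liftFree_uF : liftFree τ hτ d u uF = u :=
  letI : Algebra (MvPolynomial (Fin n) K) B := RingHom.toAlgebra' τ.toRingHom hτ
  FreeAlgebra.lift_ι_apply (R := MvPolynomial (Fin n) K) _ Gen.u

theorem liftFree_dF : liftFree τ hτ d u dF = d :=
  letI : Algebra (MvPolynomial (Fin n) K) B := RingHom.toAlgebra' τ.toRingHom hτ
  FreeAlgebra.lift_ι_apply (R := MvPolynomial (Fin n) K) _ Gen.d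

theorem liftFree_algebraMap (p : MvPolynomial (Fin n) K) :
    liftFree τ hτ d u (algebraMap _ (F K n) p) = τ p :=
  letI : Algebra (MvPolynomial (Fin n) K) B := RingHom.toAlgebra' τ.toRingHom hτ
  (FreeAlgebra.lift (MvPolynomial (Fin n) K) _).commutes p

variable (hddu : d * d * u = α • (d * u * d) + β • (u * d * d) + τ φ * d)
  (hduu : d * u * u = α • (u * d * u) + β • (u * u * d) + u * τ φ)

noncomputable def lift : A α β φ →ₐ[K] B :=
  RingQuot.liftAlgHom K ⟨liftFree τ hτ d u, by
    rintro _ _ ⟨⟩ <;>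
      simpa only [map_mul, map_add, map_smul, liftFree_uF, liftFree_dF, liftFree_algebraMap]⟩

theorem lift_D : lift τ hτ d u hddu hduu (D α β φ) = d := by
  rw [lift, D, RingQuot.liftAlgHom_mkAlgHom_apply, liftFree_dF]

theorem lift_U : lift τ hτ d u hddu hduu (U α β φ) = u := by
  rw [lift, U, RingQuot.liftAlgHom_mkAlgHom_apply, liftFree_uF]

theorem lift_T (p : MvPolynomial (Fin n) K) : lift τ hτ d u hddu hduu (T α β φ p) = τ p := by
  rw [lift, T, AlgHom.comp_apply, RingQuot.liftAlgHom_mkAlgHom_apply,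
    IsScalarTower.coe_toAlgHom', liftFree_algebraMap]

end Lift

theorem hom_ext {B : Type*} [Semiring B] [Algebra K B] {f g : A α β φ →ₐ[K] B}
    (hD : f (D α β φ) = g (D α β φ)) (hU : f (U α β φ) = g (U α β φ))
    (hT : ∀ p, f (T α β φ p) = g (T α β φ p)) : f = g := by
  refine RingQuot.ringQuot_ext' K f g (AlgHom.ext fun x => ?_)
  induction x using FreeAlgebra.induction with
  | grade0 p => exact hT p
  | grade1 i => cases i <;> assumption
  | mul x y hx hy => simp only [AlgHom.comp_apply, map_mul] at hx hy ⊢; rw [hx, hy]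
  | add x y hx hy => simp only [AlgHom.comp_apply, map_add] at hx hy ⊢; rw [hx, hy]

section Rescale

variable (c₁ c₂ : K) (g : MvPolynomial (Fin n) K →ₐ[K] MvPolynomial (Fin n) K)
  (hg : g φ = (c₁ * c₂) • φ)

noncomputable def rescale : A α β φ →ₐ[K] A α β φ :=
  lift ((T α β φ).comp g) (fun p => T_mul_comm (g p)) (c₁ • D α β φ) (c₂ • U α β φ)
    (by
      simp only [AlgHom.comp_apply, hg, map_smul, Algebra.smul_mul_assoc,
        Algebra.mul_smul_comm, smul_smul]
      rw [D_mul_D_mul_U]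
      match_scalars <;> ring)
    (by
      simp only [AlgHom.comp_apply, hg, map_smul, Algebra.smul_mul_assoc,
        Algebra.mul_smul_comm, smul_smul]
      rw [D_mul_U_mul_U]
      match_scalars <;> ring)

theorem rescale_D : rescale c₁ c₂ g hg (D α β φ) = c₁ • D α β φ := lift_D ..

theorem rescale_U : rescale c₁ c₂ g hg (U α β φ) = c₂ • U α β φ := lift_U ..

theorem rescale_T (p : MvPolynomial (Fin n) K) : rescale c₁ c₂ g hg (T α β φ p) = T α β φ (g p) :=
  lift_T ..

theorem rescale_comp_rescale (c₁' c₂' : K)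
    (g' : MvPolynomial (Fin n) K →ₐ[K] MvPolynomial (Fin n) K)
    (hg' : g' φ = (c₁' * c₂') • φ) (h₁ : c₁ * c₁' = 1) (h₂ : c₂ * c₂' = 1)
    (hgg : ∀ p, g' (g p) = p) :
    (rescale c₁' c₂' g' hg').comp (rescale c₁ c₂ g hg) = AlgHom.id K (A α β φ) := by
  apply hom_ext
  · rw [AlgHom.comp_apply, rescale_D, map_smul, rescale_D, smul_smul, h₁, one_smul, AlgHom.id_apply]
  · rw [AlgHom.comp_apply, rescale_U, map_smul, rescale_U, smul_smul, h₂, one_smul, AlgHom.id_apply]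
  · intro p
    rw [AlgHom.comp_apply, rescale_T, rescale_T, hgg, AlgHom.id_apply]

end Rescale

section RescaleEquiv

variable (c₁ c₂ : Kˣ) (g : MvPolynomial (Fin n) K ≃ₐ[K] MvPolynomial (Fin n) K)
  (hg : g φ = ((c₁ : K) * c₂) • φ)

noncomputable def rescaleEquiv : A α β φ ≃ₐ[K] A α β φ :=
  AlgEquiv.ofAlgHom (rescale c₁ c₂ g hg)
    (rescale (↑c₁⁻¹) (↑c₂⁻¹) g.symm (by
      rw [← Units.val_mul, ← mul_inv]
      exact g.symm_apply_eq_units_inv_smul (c₁ * c₂) (by rwa [Units.val_mul])))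
    (rescale_comp_rescale _ _ _ _ _ _ _ _ c₁.inv_mul c₂.inv_mul g.apply_symm_apply)
    (rescale_comp_rescale _ _ _ _ _ _ _ _ c₁.mul_inv c₂.mul_inv g.symm_apply_apply)

theorem rescaleEquiv_D : rescaleEquiv c₁ c₂ g hg (D α β φ) = (c₁ : K) • D α β φ :=
  rescale_D ..

theorem rescaleEquiv_U : rescaleEquiv c₁ c₂ g hg (U α β φ) = (c₂ : K) • U α β φ :=
  rescale_U ..

theorem rescaleEquiv_T (p : MvPolynomial (Fin n) K) :
    rescaleEquiv c₁ c₂ g hg (T α β φ p) = T α β φ (g p) :=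
  rescale_T ..

end RescaleEquiv

end DownUp

open DownUp MvPolynomial in
theorem downUp_automorphism_general {K : Type} [Field K]
    (r s : K)
    (φ : MvPolynomial (Fin 1) K)
    (lam₁ lam₂ a : K) (b : K) (h₁ : lam₁ ≠ 0) (h₂ : lam₂ ≠ 0) (ha : a ≠ 0)
    (hφ : (lam₁ * lam₂) • φ = aeval (fun _ : Fin 1 => C a * X 0 + C b) φ) :
    let α := r + s
    let β := -(r * s)
    ∃ e : A α β φ ≃ₐ[K] A α β φ,
      e (D α β φ) = lam₁ • D α β φ ∧
      e (U α β φ) = lam₂ • U α β φ ∧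
      e (T α β φ (X 0)) = a • T α β φ (X 0) + algebraMap K (A α β φ) b := by
  intro α β
  let g := affineSubst (fun _ : Fin 1 => Units.mk0 a ha) fun _ => b
  have hg_apply (p : MvPolynomial (Fin 1) K) :
      g p = aeval (fun _ : Fin 1 => C a * X 0 + C b) p := by
    simp only [g, affineSubst_apply, Units.val_mk0, Fin.fin_one_eq_zero]
  have hg : g φ = ((Units.mk0 lam₁ h₁ : K) * Units.mk0 lam₂ h₂) • φ := by
    rw [hg_apply, ← hφ, Units.val_mk0, Units.val_mk0]
  refine ⟨rescaleEquiv (α := α) (β := β) _ _ g hg, rescaleEquiv_D .., rescaleEquiv_U .., ?_⟩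
  rw [rescaleEquiv_T, hg_apply, aeval_X, map_add, map_mul, ← algebraMap_eq, AlgHom.commutes,
    AlgHom.commutes, Algebra.smul_def]

open DownUp MvPolynomial in
/-- Let char K = 0, r, s ∈ K* with r, s ≠ 1 and no multiplicative relations
(rⁱsʲ = 1 ⟹ i = j = 0), α = r + s, β = −rs, n = 1 (parameter t = X 0). For any
λ₁, λ₂, a ∈ K*, b ∈ K with λ₁λ₂·φ(t) = φ(at + b), the assignment d ↦ λ₁d,
u ↦ λ₂u, t ↦ at + b extends to a K-algebra automorphism of A(α,β,φ). -/
theorem downUp_automorphism {K : Type} [Field K] [CharZero K]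
    (r s : K) (hr : r ≠ 0) (hs : s ≠ 0) (hr1 : r ≠ 1) (hs1 : s ≠ 1)
    (hrs : ∀ i j : ℤ, r ^ i * s ^ j = 1 → i = 0 ∧ j = 0)
    (φ : MvPolynomial (Fin 1) K)
    (lam₁ lam₂ a : K) (b : K) (h₁ : lam₁ ≠ 0) (h₂ : lam₂ ≠ 0) (ha : a ≠ 0)
    (hφ : (lam₁ * lam₂) • φ = aeval (fun _ : Fin 1 => C a * X 0 + C b) φ) :
    let α := r + s
    let β := -(r * s)
    ∃ e : A α β φ ≃ₐ[K] A α β φ,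
      e (D α β φ) = lam₁ • D α β φ ∧
      e (U α β φ) = lam₂ • U α β φ ∧
      e (T α β φ (X 0)) = a • T α β φ (X 0) + algebraMap K (A α β φ) b :=
  downUp_automorphism_general r s φ lam₁ lam₂ a b h₁ h₂ ha hφ
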